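/- arXiv:0802.1006 — 2 statements merged into one kernel-verified Lean document; each statement's English description precedes it below -/
import Mathlib

section
/- Let f : F → G be a homomorphism of formal group laws over a commutative ring R. Then f'(X)·F_Y(X,0) = f'(0)·G_Y(f(X),0) in R[[X]], where f' denotes the formal derivative of f, f'(0) its linear coefficient, and G_Y(f(X),0) denotes the substitution of f(X) into the one-variable power series G_Y(T,0). -/
/-!
View `R⟦X,Y⟧` as `R⟦X⟧⟦Y⟧` and compare the coefficients of `Y` on the two sides of
`f(F(X,Y)) = G(f(X),f(Y))`. Since `F(X,Y) ≡ X + Y·F_Y(X,0) mod Y²`, the left side contributes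
`f'(X)·F_Y(X,0)`; since `f(X)` has no `Y` and `f(Y) ≡ f'(0)·Y mod Y²`, the right side
contributes `G_Y(f(X),0)·f'(0)`.
-/


namespace FGL

variable {R : Type*} [CommRing R]

/-- `subst2 F a b` is the substitution `F(a,b)` of the power series `a`, `b`
(with zero constant term) into the two-variable power series `F`. -/
noncomputable def subst2 {σ : Type*} (F : MvPowerSeries (Fin 2) R)
    (a b : MvPowerSeries σ R) : MvPowerSeries σ R :=
  fun d =>
    ∑ ij ∈ Finset.range ((d.sum fun _ k => k) + 1) ×ˢ
        Finset.range ((d.sum fun _ k => k) + 1),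
      MvPowerSeries.coeff (Finsupp.single 0 ij.1 + Finsupp.single 1 ij.2) F *
        MvPowerSeries.coeff d (a ^ ij.1 * b ^ ij.2)

/-- `subst1 f G` is the substitution `f(G)` of the power series `G`
(with zero constant term) into the one-variable power series `f`. -/
noncomputable def subst1 {σ : Type*} (f : PowerSeries R) (G : MvPowerSeries σ R) :
    MvPowerSeries σ R :=
  fun d =>
    ∑ n ∈ Finset.range ((d.sum fun _ k => k) + 1),
      PowerSeries.coeff n f * MvPowerSeries.coeff d (G ^ n)

/-- Composition `f(g)` of one-variable power series (`g` with zero constant term). -/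
noncomputable def pcomp (f g : PowerSeries R) : PowerSeries R := subst1 f g

/-- A formal group law over `R`: a two-variable power series `F(X,Y)` with
`F(X,0) = X`, `F(0,Y) = Y`, `F(X,Y) = F(Y,X)` and `F(F(X,Y),Z) = F(X,F(Y,Z))`. -/
structure IsFGL (F : MvPowerSeries (Fin 2) R) : Prop where
  unit_left : subst2 F (MvPowerSeries.X 0) 0 = MvPowerSeries.X 0
  unit_right : subst2 F 0 (MvPowerSeries.X 1) = MvPowerSeries.X 1
  comm : subst2 F (MvPowerSeries.X 1) (MvPowerSeries.X 0) = F
  assoc : subst2 F (subst2 F (MvPowerSeries.X 0) (MvPowerSeries.X 1))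
        (MvPowerSeries.X 2 : MvPowerSeries (Fin 3) R)
      = subst2 F (MvPowerSeries.X 0) (subst2 F (MvPowerSeries.X 1) (MvPowerSeries.X 2))

/-- A homomorphism `f : F → G` of formal group laws: a one-variable power series with
zero constant term such that `f(F(X,Y)) = G(f(X), f(Y))`. -/
structure IsHom (F G : MvPowerSeries (Fin 2) R) (f : PowerSeries R) : Prop where
  const : PowerSeries.constantCoeff f = 0
  hom : subst1 f F =
    subst2 G (subst1 f (MvPowerSeries.X 0)) (subst1 f (MvPowerSeries.X 1))

/-- The coefficientwise Frobenius twist `F^{(p)}`. -/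
noncomputable def frob (p : ℕ) (F : MvPowerSeries (Fin 2) R) : MvPowerSeries (Fin 2) R :=
  fun d => (MvPowerSeries.coeff d F) ^ p

/-- The one-variable power series `F_Y(X,0)`, whose coefficient of `X^n` is the
coefficient of `X^n Y` in `F`. -/
noncomputable def FY0 (F : MvPowerSeries (Fin 2) R) : PowerSeries R :=
  PowerSeries.mk fun n =>
    MvPowerSeries.coeff (Finsupp.single 0 n + Finsupp.single 1 1) F

/-- The formal partial derivative `F_X(X,Y)` with respect to the first variable. -/
noncomputable def FX (F : MvPowerSeries (Fin 2) R) : MvPowerSeries (Fin 2) R :=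
  fun d => ((d 0 + 1 : ℕ) : R) * MvPowerSeries.coeff (d + Finsupp.single 0 1) F

/-- The `n`-series `[n]_F` of a formal group law, defined by `[0]_F = 0` and
`[n+1]_F(X) = F([n]_F(X), X)`. -/
noncomputable def nSeries (F : MvPowerSeries (Fin 2) R) : ℕ → PowerSeries R
  | 0 => 0
  | n + 1 => subst2 F (nSeries F n) PowerSeries.X

end FGL

namespace PowerSeries

variable {R : Type*} [CommSemiring R]

theorem coeff_pow_eq_zero_of_lt {f : PowerSeries R}
    (hf : constantCoeff f = 0) {n m : ℕ} (h : n < m) :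
    coeff n (f ^ m) = 0 :=
  coeff_of_lt_order n <|
    (Nat.cast_lt.mpr h).trans_le (le_order_pow_of_constantCoeff_eq_zero m hf)

theorem coeff_one_pow_of_constantCoeff_eq_zero {f : PowerSeries R}
    (hf : constantCoeff f = 0) (j : ℕ) :
    coeff 1 (f ^ j) = if j = 1 then coeff 1 f else 0 := by
  rw [coeff_one_pow, hf]
  rcases j with _ | _ | j <;> simp

end PowerSeries

namespace FGL

variable {R : Type*} [CommRing R]

open Finsupp (single)

theorem sum_single_add_single {σ : Type*} (i j : σ) (m n : ℕ) :
    ((single i m + single j n).sum fun _ k => k) = m + n := by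
  rw [Finsupp.sum_add_index' (fun _ => rfl) (fun _ _ _ => rfl),
    Finsupp.sum_single_index rfl, Finsupp.sum_single_index rfl]

theorem coeff_subst1 {σ : Type*} (f : PowerSeries R) (G : MvPowerSeries σ R) (d : σ →₀ ℕ) :
    MvPowerSeries.coeff d (subst1 f G) =
      ∑ m ∈ Finset.range ((d.sum fun _ k => k) + 1),
        PowerSeries.coeff m f * MvPowerSeries.coeff d (G ^ m) := rfl

theorem coeff_subst2 {σ : Type*} (F : MvPowerSeries (Fin 2) R) (a b : MvPowerSeries σ R)
    (d : σ →₀ ℕ) :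
    MvPowerSeries.coeff d (subst2 F a b) =
      ∑ ij ∈ Finset.range ((d.sum fun _ k => k) + 1) ×ˢ
          Finset.range ((d.sum fun _ k => k) + 1),
        MvPowerSeries.coeff (single 0 ij.1 + single 1 ij.2) F *
          MvPowerSeries.coeff d (a ^ ij.1 * b ^ ij.2) := rfl

theorem coeff_pcomp (g f : PowerSeries R) (n : ℕ) :
    PowerSeries.coeff n (pcomp g f) =
      ∑ i ∈ Finset.range (n + 1), PowerSeries.coeff i g * PowerSeries.coeff n (f ^ i) := by
  change MvPowerSeries.coeff (single () n) (subst1 g f) = _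
  rw [coeff_subst1, Finsupp.sum_single_index rfl]
  rfl

theorem coeff_subst1_X {σ : Type*} [DecidableEq σ] (f : PowerSeries R) (i : σ)
    (d : σ →₀ ℕ) :
    MvPowerSeries.coeff d (subst1 f (MvPowerSeries.X i)) =
      if d = single i (d i) then PowerSeries.coeff (d i) f else 0 := by
  rw [coeff_subst1]
  simp only [MvPowerSeries.coeff_X_pow, mul_ite, mul_one, mul_zero]
  split_ifs with hd
  · have hX (m : ℕ) : d = single i m ↔ d i = m :=
      ⟨fun h => by rw [h]; simp, fun h : d i = m => h ▸ hd⟩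
    rw [Finset.sum_congr rfl fun m _ => if_congr (hX m) rfl rfl, Finset.sum_ite_eq,
      if_pos (by rw [Finset.mem_range, Nat.lt_succ_iff, hd]; simp)]
  · exact Finset.sum_eq_zero fun m _ => if_neg fun h => hd (by rw [h]; simp)

/-- `R⟦X,Y⟧ ≃ R⟦X⟧⟦Y⟧`, with `Y = X 1` the outer variable. -/
noncomputable def expandY : MvPowerSeries (Fin 2) R ≃ₐ[R] PowerSeries (PowerSeries R) :=
  (MvPowerSeries.renameEquiv R ((finSuccEquiv' 1).trans (Equiv.optionCongr finOneEquiv))).trans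
    (MvPowerSeries.optionEquivLeft Unit R)

theorem coeff_coeff_expandY (φ : MvPowerSeries (Fin 2) R) (k n : ℕ) :
    PowerSeries.coeff n (PowerSeries.coeff k (expandY φ)) =
      MvPowerSeries.coeff (single 0 n + single 1 k) φ := by
  set e := (finSuccEquiv' (1 : Fin 2)).trans (Equiv.optionCongr finOneEquiv)
  have he : (single () n).optionElim k =
      Finsupp.embDomain e.toEmbedding (single 0 n + single 1 k) := by
    ext o
    rcases o with _ | ⟨⟩ <;>
      simp [e, Finsupp.embDomain_add, Finsupp.embDomain_single, Finsupp.single_apply]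
  change MvPowerSeries.coeff (single () n) _ = _
  rw [expandY, AlgEquiv.trans_apply, MvPowerSeries.coeff_coeff_optionEquivLeft, he]
  exact MvPowerSeries.coeff_embDomain_rename _ _ _

theorem FY0_eq_coeff_one_expandY (φ : MvPowerSeries (Fin 2) R) :
    FY0 φ = PowerSeries.coeff 1 (expandY φ) := by
  ext n
  rw [coeff_coeff_expandY, FY0, PowerSeries.coeff_mk]

theorem coeff_constantCoeff_expandY (φ : MvPowerSeries (Fin 2) R) (n : ℕ) :
    PowerSeries.coeff n (PowerSeries.constantCoeff (expandY φ)) =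
      MvPowerSeries.coeff (single 0 n) φ := by
  rw [← PowerSeries.coeff_zero_eq_constantCoeff_apply, coeff_coeff_expandY, Finsupp.single_zero,
    add_zero]

theorem expandY_subst1_X_zero (f : PowerSeries R) :
    expandY (subst1 f (MvPowerSeries.X 0)) = PowerSeries.C f := by
  ext k n
  rw [coeff_coeff_expandY, coeff_subst1_X, PowerSeries.coeff_C]
  rcases k with _ | k <;> simp [Finsupp.ext_iff, Fin.forall_fin_two]

theorem expandY_subst1_X_one (f : PowerSeries R) :
    expandY (subst1 f (MvPowerSeries.X 1)) = PowerSeries.map PowerSeries.C f := by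
  ext k n
  rw [coeff_coeff_expandY, coeff_subst1_X, PowerSeries.coeff_map, PowerSeries.coeff_C]
  rcases n with _ | n <;> simp [Finsupp.ext_iff, Fin.forall_fin_two]

theorem subst2_zero_right {σ : Type*} (F : MvPowerSeries (Fin 2) R) (a : MvPowerSeries σ R) :
    subst2 F a 0 = subst1 (PowerSeries.constantCoeff (expandY F)) a := by
  ext d
  rw [coeff_subst2, coeff_subst1, Finset.sum_product]
  refine Finset.sum_congr rfl fun i _ => ?_
  rw [Finset.sum_eq_single 0 (fun j _ hj => by rw [zero_pow hj, mul_zero, map_zero, mul_zero])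
    (fun h => absurd (by simp) h), coeff_constantCoeff_expandY, pow_zero, mul_one,
    Finsupp.single_zero, add_zero]

theorem IsFGL.constantCoeff_expandY {F : MvPowerSeries (Fin 2) R} (hF : IsFGL F) :
    PowerSeries.constantCoeff (expandY F) = PowerSeries.X := by
  ext n
  have h := congrArg (MvPowerSeries.coeff (single 0 n)) hF.unit_left
  rw [subst2_zero_right, coeff_subst1_X, MvPowerSeries.coeff_X] at h
  simpa [PowerSeries.coeff_X, coeff_constantCoeff_expandY, (Finsupp.single_injective _).eq_iff]
    using h

theorem FY0_subst1 (f : PowerSeries R) {H : MvPowerSeries (Fin 2) R}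
    (hH : PowerSeries.constantCoeff (expandY H) = PowerSeries.X) :
    FY0 (subst1 f H) = PowerSeries.derivative R f * FY0 H := by
  ext n
  have hpow (m : ℕ) : MvPowerSeries.coeff (single 0 n + single 1 1) (H ^ m) =
      PowerSeries.coeff n (PowerSeries.X ^ (m - 1) * FY0 H) * m := by
    rw [← coeff_coeff_expandY, map_pow, PowerSeries.coeff_one_pow, hH, FY0_eq_coeff_one_expandY,
      ← PowerSeries.coeff_mul_C, map_natCast]
    ring_nf
  rw [FY0_eq_coeff_one_expandY, coeff_coeff_expandY, coeff_subst1, sum_single_add_single,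
    Finset.sum_range_succ', hpow, Nat.cast_zero, mul_zero, mul_zero, add_zero,
    PowerSeries.coeff_mul, Finset.Nat.sum_antidiagonal_eq_sum_range_succ_mk]
  refine Finset.sum_congr rfl fun i hi => ?_
  rw [hpow, PowerSeries.coeff_derivative, Nat.add_sub_cancel, PowerSeries.coeff_X_pow_mul',
    if_pos (Nat.lt_succ_iff.mp (Finset.mem_range.mp hi))]
  push_cast
  ring

theorem FY0_subst2_subst1_X {f : PowerSeries R} (hf : PowerSeries.constantCoeff f = 0)
    (G : MvPowerSeries (Fin 2) R) :
    FY0 (subst2 G (subst1 f (MvPowerSeries.X 0)) (subst1 f (MvPowerSeries.X 1))) =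
      PowerSeries.C (PowerSeries.coeff 1 f) * pcomp (FY0 G) f := by
  ext n
  have hmap : PowerSeries.constantCoeff (PowerSeries.map PowerSeries.C f) = 0 := by
    rw [← PowerSeries.coeff_zero_eq_constantCoeff_apply, PowerSeries.coeff_map,
      PowerSeries.coeff_zero_eq_constantCoeff_apply, hf, map_zero]
  have hterm (i j : ℕ) : MvPowerSeries.coeff (single (0 : Fin 2) n + single 1 1)
      (subst1 f (MvPowerSeries.X 0) ^ i * subst1 f (MvPowerSeries.X 1) ^ j) =
        if j = 1 then PowerSeries.coeff n (f ^ i) * PowerSeries.coeff 1 f else 0 := by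
    rw [← coeff_coeff_expandY, map_mul, map_pow, map_pow, expandY_subst1_X_zero,
      expandY_subst1_X_one, ← map_pow, PowerSeries.coeff_C_mul,
      PowerSeries.coeff_one_pow_of_constantCoeff_eq_zero hmap]
    split_ifs <;> simp [PowerSeries.coeff_map, PowerSeries.coeff_mul_C]
  rw [FY0_eq_coeff_one_expandY, coeff_coeff_expandY, coeff_subst2, sum_single_add_single,
    Finset.sum_product, PowerSeries.coeff_C_mul, coeff_pcomp, Finset.mul_sum]
  simp only [hterm, mul_ite, mul_zero, Finset.sum_ite_eq', Finset.mem_range,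
    if_pos (by omega : 1 < n + 1 + 1)]
  rw [Finset.sum_range_succ, PowerSeries.coeff_pow_eq_zero_of_lt hf (Nat.lt_succ_self n),
    zero_mul, mul_zero, add_zero]
  refine Finset.sum_congr rfl fun i _ => ?_
  rw [FY0, PowerSeries.coeff_mk]
  ring

theorem statement1_general (R : Type*) [CommRing R]
    (F G : MvPowerSeries (Fin 2) R) (hF : IsFGL F)
    (f : PowerSeries R) (hf : IsHom F G f) :
    PowerSeries.derivativeFun f * FY0 F =
      PowerSeries.C (PowerSeries.coeff 1 f) * pcomp (FY0 G) f := by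
  have h := congrArg FY0 hf.hom
  rwa [FY0_subst1 f hF.constantCoeff_expandY, FY0_subst2_subst1_X hf.const] at h

/-- For a homomorphism `f : F → G` of formal group laws over a commutative ring `R`,
`f'(X) · F_Y(X,0) = f'(0) · G_Y(f(X),0)` in `R[[X]]`. -/
theorem statement1 (R : Type*) [CommRing R]
    (F G : MvPowerSeries (Fin 2) R) (hF : IsFGL F) (hG : IsFGL G)
    (f : PowerSeries R) (hf : IsHom F G f) :
    PowerSeries.derivativeFun f * FY0 F =
      PowerSeries.C (PowerSeries.coeff 1 f) * pcomp (FY0 G) f :=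
  statement1_general R F G hF f hf

end FGL
end

section
/- Let F and G be formal group laws over a commutative ring R, let φ : F → G be a strict isomorphism, let p be a prime, and let m ≥ 2. If the coefficient of X^j in the p-series [p]_F vanishes for all 1 ≤ j < m, then the coefficient of X^j in [p]_G also vanishes for all 1 ≤ j < m, and the coefficients of X^m in [p]_F and in [p]_G are equal. (In particular, over a ring with p = 0, the element v_n^F — the coefficient of X^{p^n} in [p]_F when all lower coefficients vanish — depends only on the strict isomorphism class of F.) -/
namespace FGL

variable {R : Type*} [CommRing R]

/-!
`φ` intertwines the `n`-series: substituting into `φ(F(X,Y)) = G(φ(X), φ(Y))` and inducting on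
`n` gives `[n]_G ∘ φ = φ ∘ [n]_F`. A series `u ≡ X mod X²` satisfies
`u ∘ h ≡ h ≡ h ∘ u mod X^(m+1)` whenever `X^m ∣ h` and `h(0) = 0`; applying this to `φ` and
to its compositional inverse `ψ` gives `[p]_G = φ ∘ ([p]_F ∘ ψ) ≡ [p]_F mod X^(m+1)`.

On series with zero constant term, `subst1` and `subst2` agree with Mathlib's
`PowerSeries.subst` and `MvPowerSeries.subst`, whose associativity does the bookkeeping.
-/

section Substitution

open MvPowerSeries

variable {σ τ : Type*}

lemma coeff_pow_mul_pow_eq_zero {a b : MvPowerSeries σ R} (ha : constantCoeff a = 0)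
    (hb : constantCoeff b = 0) {i j : ℕ} {d : σ →₀ ℕ} (h : Finsupp.degree d < i + j) :
    coeff d (a ^ i * b ^ j) = 0 := by
  refine coeff_of_lt_order (lt_of_lt_of_le ?_ le_order_mul)
  exact lt_of_lt_of_le (by exact_mod_cast h) (add_le_add
    (le_order_pow_of_constantCoeff_eq_zero i ha) (le_order_pow_of_constantCoeff_eq_zero j hb))

lemma coeff_pow_eq_zero {a : MvPowerSeries σ R} (ha : constantCoeff a = 0) {n : ℕ}
    {d : σ →₀ ℕ} (h : Finsupp.degree d < n) : coeff d (a ^ n) = 0 := by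
  simpa using coeff_pow_mul_pow_eq_zero ha ha (j := 0) h

lemma subst1_eq_subst {G : MvPowerSeries σ R} (hG : constantCoeff G = 0) (f : PowerSeries R) :
    subst1 f G = f.subst G := by
  ext d
  rw [PowerSeries.coeff_subst (PowerSeries.HasSubst.of_constantCoeff_zero hG),
    finsum_eq_sum_of_support_subset (s := Finset.range (Finsupp.degree d + 1))]
  · rfl
  intro n hn
  simp only [Function.mem_support, Finset.coe_range, Set.mem_Iio] at hn ⊢
  by_contra hlt
  exact hn (by rw [coeff_pow_eq_zero hG (by omega), smul_zero])

lemma subst2_eq_subst {a b : MvPowerSeries σ R} (ha : constantCoeff a = 0)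
    (hb : constantCoeff b = 0) (F : MvPowerSeries (Fin 2) R) :
    subst2 F a b = subst ![a, b] F := by
  ext d
  let e : ℕ × ℕ ≃ (Fin 2 →₀ ℕ) :=
    (piFinTwoEquiv fun _ => ℕ).symm.trans Finsupp.equivFunOnFinite.symm
  have he (ij : ℕ × ℕ) : e ij = Finsupp.single 0 ij.1 + Finsupp.single 1 ij.2 := by
    ext k
    fin_cases k <;> simp [e]
  have hterm (ij : ℕ × ℕ) :
      coeff (e ij) F • coeff d ((e ij).prod fun s k => ![a, b] s ^ k) =
        coeff (Finsupp.single 0 ij.1 + Finsupp.single 1 ij.2) F *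
          coeff d (a ^ ij.1 * b ^ ij.2) := by
    rw [he, smul_eq_mul, Finsupp.prod_fintype _ _ (by simp), Fin.prod_univ_two]
    simp
  rw [coeff_subst (hasSubst_of_constantCoeff_zero (by simp [ha, hb])),
    ← finsum_comp_equiv e, finsum_eq_sum_of_support_subset
      (s := Finset.range (Finsupp.degree d + 1) ×ˢ Finset.range (Finsupp.degree d + 1))]
  · exact Finset.sum_congr rfl fun ij _ => (hterm ij).symm
  rintro ⟨i, j⟩ hij
  simp only [Function.mem_support, hterm, Finset.coe_product, Finset.coe_range, Set.mem_prod,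
    Set.mem_Iio] at hij ⊢
  by_contra hlt
  exact hij (by rw [coeff_pow_mul_pow_eq_zero ha hb (by omega), mul_zero])

lemma constantCoeff_subst2 (F : MvPowerSeries (Fin 2) R) (a b : MvPowerSeries σ R) :
    constantCoeff (subst2 F a b) = constantCoeff F := by
  show ∑ ij ∈ Finset.range 1 ×ˢ Finset.range 1,
    coeff (Finsupp.single 0 ij.1 + Finsupp.single 1 ij.2) F * coeff 0 (a ^ ij.1 * b ^ ij.2) = _
  simp

lemma subst_subst_pair {a b : MvPowerSeries σ R} (hab : HasSubst ![a, b])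
    {c : σ → MvPowerSeries τ R} (hc : HasSubst c) (H : MvPowerSeries (Fin 2) R) :
    subst c (subst ![a, b] H) = subst ![subst c a, subst c b] H := by
  rw [subst_comp_subst_apply hab hc]
  congr 1
  ext i : 1
  fin_cases i <;> rfl

lemma subst_powerSeries_subst {a : MvPowerSeries σ R} (ha : constantCoeff a = 0)
    {c : σ → MvPowerSeries τ R} (hc : HasSubst c) (f : PowerSeries R) :
    subst c (f.subst a) = f.subst (subst c a) :=
  subst_comp_subst_apply (PowerSeries.HasSubst.of_constantCoeff_zero ha).const hc f

end Substitution

section OneVariable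

open PowerSeries

lemma constantCoeff_subst_of_constantCoeff_zero {g : R⟦X⟧} (hg : constantCoeff g = 0)
    (f : R⟦X⟧) : constantCoeff (subst g f) = constantCoeff f := by
  rw [← subst1_eq_subst hg]
  show ∑ n ∈ Finset.range 1, coeff n f * MvPowerSeries.coeff 0 (g ^ n) = _
  simp

variable {u h : R⟦X⟧} {m : ℕ}

lemma X_pow_succ_dvd_subst_sub_left (hu0 : constantCoeff u = 0) (hu1 : coeff 1 u = 1)
    (hh0 : constantCoeff h = 0) (hh : X ^ m ∣ h) : X ^ (m + 1) ∣ subst h u - h := by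
  have hsub : HasSubst h := HasSubst.of_constantCoeff_zero' hh0
  obtain ⟨v, hv⟩ : X ^ 2 ∣ u - X := by
    refine X_pow_dvd_iff.mpr fun j hj => ?_
    interval_cases j <;> simp [hu0, hu1]
  have hsq : subst h u - h = h ^ 2 * subst h v := by
    rw [sub_eq_iff_eq_add.mp hv, subst_add hsub, subst_mul hsub, subst_pow hsub, subst_X hsub]
    ring
  rw [hsq, pow_succ, sq]
  exact (mul_dvd_mul hh (X_dvd_iff.mpr hh0)).mul_right _

lemma X_pow_succ_dvd_subst_sub_right (hu0 : constantCoeff u = 0) (hu1 : coeff 1 u = 1)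
    (hh : X ^ m ∣ h) : X ^ (m + 1) ∣ subst u h - h := by
  have hsub : HasSubst u := HasSubst.of_constantCoeff_zero' hu0
  obtain ⟨k, rfl⟩ := hh
  obtain ⟨w, rfl⟩ := X_dvd_iff.mpr hu0
  have hw : constantCoeff w = 1 := by simpa using hu1
  rw [subst_mul hsub, subst_pow hsub, subst_X hsub, mul_pow, mul_assoc, ← mul_sub, pow_succ]
  refine mul_dvd_mul_left _ (X_dvd_iff.mpr ?_)
  rw [map_sub, map_mul, constantCoeff_subst_of_constantCoeff_zero hu0, map_pow, hw]
  ring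

lemma X_pow_succ_dvd_sub_of_subst_eq_subst {φ f g : R⟦X⟧} (hφ0 : constantCoeff φ = 0)
    (hφ1 : coeff 1 φ = 1) (hf0 : constantCoeff f = 0) (hf : X ^ m ∣ f)
    (hfg : subst φ g = subst f φ) : X ^ (m + 1) ∣ g - f := by
  let : Invertible (coeff 1 φ) := ⟨1, by simp [hφ1], by simp [hφ1]⟩
  set ψ := φ.substInv
  have hψ0 : constantCoeff ψ = 0 := constantCoeff_substInv φ
  have hψ1 : coeff 1 ψ = 1 := by
    rw [coeff_one_substInv]
    exact invOf_eq_right_inv (by simp [hφ1])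
  have hφ := HasSubst.of_constantCoeff_zero' hφ0
  have hψ := HasSubst.of_constantCoeff_zero' hψ0
  set k := subst ψ f
  have hg : g = subst k φ := by
    calc g = subst (subst ψ φ) g := by rw [subst_substInv_right φ hφ0, X_subst]
      _ = subst ψ (subst φ g) := (subst_comp_subst_apply hφ hψ g).symm
      _ = subst k φ := by rw [hfg, subst_comp_subst_apply (.of_constantCoeff_zero' hf0) hψ φ]
  have hkf : X ^ (m + 1) ∣ k - f := X_pow_succ_dvd_subst_sub_right hψ0 hψ1 hf
  have hk : X ^ m ∣ k := by
    simpa using dvd_add (dvd_trans (pow_dvd_pow X m.le_succ) hkf) hf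
  rw [hg, ← sub_add_sub_cancel _ k]
  exact dvd_add (X_pow_succ_dvd_subst_sub_left hφ0 hφ1
    ((constantCoeff_subst_of_constantCoeff_zero hψ0 f).trans hf0) hk) hkf

end OneVariable

section FormalGroupLaw

open MvPowerSeries

variable {σ : Type*} {F G : MvPowerSeries (Fin 2) R} {φ : PowerSeries R}

lemma IsFGL.constantCoeff_eq_zero (hF : IsFGL F) : constantCoeff F = 0 := by
  simpa [constantCoeff_subst2] using congrArg constantCoeff hF.unit_left

lemma constantCoeff_nSeries (hF : IsFGL F) (n : ℕ) :
    PowerSeries.constantCoeff (nSeries F n) = 0 := by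
  cases n with
  | zero => simp [nSeries]
  | succ n => exact (constantCoeff_subst2 F _ _).trans hF.constantCoeff_eq_zero

lemma nSeries_succ (hF : IsFGL F) (n : ℕ) :
    nSeries F (n + 1) = subst ![nSeries F n, PowerSeries.X] F :=
  subst2_eq_subst (constantCoeff_nSeries hF n) PowerSeries.constantCoeff_X F

lemma IsHom.constantCoeff_subst_X (hφ : IsHom F G φ) (i : Fin 2) :
    constantCoeff (φ.subst (X i : MvPowerSeries (Fin 2) R)) = 0 :=
  PowerSeries.constantCoeff_subst_eq_zero (constantCoeff_X i) φ hφ.const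

lemma IsHom.subst_eq (hφ : IsHom F G φ) (hF : constantCoeff F = 0) :
    φ.subst F = subst ![φ.subst (X 0 : MvPowerSeries (Fin 2) R), φ.subst (X 1)] G := by
  have := hφ.hom
  rwa [subst1_eq_subst hF, subst1_eq_subst (constantCoeff_X 0),
    subst1_eq_subst (constantCoeff_X 1),
    subst2_eq_subst (hφ.constantCoeff_subst_X 0) (hφ.constantCoeff_subst_X 1)] at this

lemma IsHom.subst_subst (hφ : IsHom F G φ) (hF : constantCoeff F = 0)
    {a b : MvPowerSeries σ R} (ha : constantCoeff a = 0) (hb : constantCoeff b = 0) :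
    φ.subst (subst ![a, b] F) = subst ![φ.subst a, φ.subst b] G := by
  have hab : HasSubst ![a, b] := hasSubst_of_constantCoeff_zero (by simp [ha, hb])
  rw [← subst_powerSeries_subst hF hab, hφ.subst_eq hF,
    subst_subst_pair (hasSubst_of_constantCoeff_zero (by simp [hφ.constantCoeff_subst_X])) hab,
    subst_powerSeries_subst (constantCoeff_X 0) hab,
    subst_powerSeries_subst (constantCoeff_X 1) hab, subst_X hab, subst_X hab]
  rfl

lemma IsHom.subst_nSeries (hF : IsFGL F) (hG : IsFGL G) (hφ : IsHom F G φ) (n : ℕ) :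
    (nSeries G n).subst φ = φ.subst (nSeries F n) := by
  induction n with
  | zero =>
    simp [nSeries, hφ.const, ← PowerSeries.coe_substAlgHom (.of_constantCoeff_zero' hφ.const)]
  | succ n ih =>
    have hX : constantCoeff (PowerSeries.X : PowerSeries R) = 0 := PowerSeries.constantCoeff_X
    have hGn : constantCoeff (nSeries G n) = 0 := constantCoeff_nSeries hG n
    have hφ' : HasSubst fun _ : Unit => φ :=
      (PowerSeries.HasSubst.of_constantCoeff_zero' hφ.const).const
    calc (nSeries G (n + 1)).subst φ
        = subst ![(nSeries G n).subst φ, PowerSeries.X.subst φ] G := by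
          rw [nSeries_succ hG, PowerSeries.subst_def, subst_subst_pair
            (hasSubst_of_constantCoeff_zero (by simp [hGn, hX])) hφ']
          rfl
      _ = subst ![φ.subst (nSeries F n), φ.subst PowerSeries.X] G := by
          rw [ih, PowerSeries.subst_X (R := R) (.of_constantCoeff_zero' hφ.const),
            PowerSeries.X_subst]
      _ = φ.subst (nSeries F (n + 1)) := by
          rw [nSeries_succ hF,
            hφ.subst_subst hF.constantCoeff_eq_zero (constantCoeff_nSeries hF n) hX]

end FormalGroupLaw

theorem statement12_general (R : Type*) [CommRing R]
    (F G : MvPowerSeries (Fin 2) R) (hF : IsFGL F) (hG : IsFGL G)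
    (φ : PowerSeries R) (hφ : IsHom F G φ) (hφ1 : PowerSeries.coeff 1 φ = 1)
    (p : ℕ) (m : ℕ)
    (hlow : ∀ j : ℕ, 1 ≤ j → j < m → PowerSeries.coeff j (nSeries F p) = 0) :
    (∀ j : ℕ, 1 ≤ j → j < m → PowerSeries.coeff j (nSeries G p) = 0) ∧
      PowerSeries.coeff m (nSeries F p) = PowerSeries.coeff m (nSeries G p) := by
  have hF0 := constantCoeff_nSeries hF p
  have hdvd : PowerSeries.X ^ m ∣ nSeries F p := by
    refine PowerSeries.X_pow_dvd_iff.mpr fun j hj => ?_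
    rcases j.eq_zero_or_pos with rfl | hj0
    · simpa using hF0
    · exact hlow j hj0 hj
  have hcong := X_pow_succ_dvd_sub_of_subst_eq_subst hφ.const hφ1 hF0 hdvd
    (hφ.subst_nSeries hF hG p)
  have hcoeff (j : ℕ) (hj : j ≤ m) :
      PowerSeries.coeff j (nSeries G p) = PowerSeries.coeff j (nSeries F p) := by
    simpa [sub_eq_zero] using PowerSeries.X_pow_dvd_iff.mp hcong j (Nat.lt_succ_of_le hj)
  exact ⟨fun j hj1 hjm => (hcoeff j hjm.le).trans (hlow j hj1 hjm), (hcoeff m le_rfl).symm⟩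

/-- Let `φ : F → G` be a strict isomorphism of formal group laws over `R`, `p` a prime and
`m ≥ 2`.  If the coefficients of `X^j` in `[p]_F` vanish for all `1 ≤ j < m`, then the same
holds for `[p]_G`, and the coefficients of `X^m` in `[p]_F` and `[p]_G` agree. -/
theorem statement12 (R : Type*) [CommRing R]
    (F G : MvPowerSeries (Fin 2) R) (hF : IsFGL F) (hG : IsFGL G)
    (φ : PowerSeries R) (hφ : IsHom F G φ) (hφ1 : PowerSeries.coeff 1 φ = 1)
    (p : ℕ) (hp : p.Prime) (m : ℕ) (hm : 2 ≤ m)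
    (hlow : ∀ j : ℕ, 1 ≤ j → j < m → PowerSeries.coeff j (nSeries F p) = 0) :
    (∀ j : ℕ, 1 ≤ j → j < m → PowerSeries.coeff j (nSeries G p) = 0) ∧
      PowerSeries.coeff m (nSeries F p) = PowerSeries.coeff m (nSeries G p) :=
  statement12_general R F G hF hG φ hφ hφ1 p m hlow

end FGL
end
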